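/- arXiv:2401.07140 — 6 statements merged into one kernel-verified Lean document; each statement's English description precedes it below -/
import Mathlib

section
/- Let α ∈ (0,1), let u : ℝ → ℝ be bounded and continuously differentiable with bounded derivative, and let x ∈ ℝ. Then (1/Γ(−α)) ∫_{−∞}^{0} (u(x+z) − u(x))/|z|^{1+α} dz = (1/Γ(1−α)) · lim_{R→∞} ∫_{0}^{R} u'(x−z)/z^{α} dz; in particular the improper integral on the right converges. -/
/-!
Put `w t = u x - u (x - t)`, so that `w' t = u' (x - t)`, `|w t| ≤ ‖u'‖∞ t` and `|w t| ≤ 2 ‖u‖∞`.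
Integrating `w'` by parts against `t ^ (-α)` on `(0, R]`, the boundary term at `0` vanishes because
`α < 1`, and
`∫₀ᴿ u' (x - t) / t ^ α = w R / R ^ α + α ∫₀ᴿ w t / t ^ (1 + α)`.
As `R → ∞` the boundary term decays like `R ^ (-α)` and the last integral converges absolutely.
The substitution `z = -t` and `Γ (1 - α) = -α Γ (-α)` identify the limit with the Marchaud integral.
-/

open MeasureTheory Set Filter Topology Real

theorem abs_div_rpow_le {a C t s : ℝ} (ht : 0 < t) (h : |a| ≤ C) : |a / t ^ s| ≤ C * t ^ (-s) := by
  rw [abs_div, abs_of_pos (rpow_pos_of_pos ht s), rpow_neg ht.le, ← div_eq_mul_inv]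
  gcongr

theorem integrableOn_Ioc_zero_of_abs_le_rpow {g : ℝ → ℝ} {C s R : ℝ} (hs : -1 < s)
    (hg : ContinuousOn g (Ioc 0 R)) (hbound : ∀ t ∈ Ioc 0 R, |g t| ≤ C * t ^ s) :
    IntegrableOn g (Ioc 0 R) := by
  refine Integrable.mono' ((intervalIntegral.intervalIntegrable_rpow' hs).1.const_mul C)
    (hg.aestronglyMeasurable measurableSet_Ioc) ?_
  filter_upwards [ae_restrict_mem measurableSet_Ioc] with t ht
  exact hbound t ht

theorem integrableOn_Ioi_of_abs_le_rpow {g : ℝ → ℝ} {C s a : ℝ} (hs : s < -1) (ha : 0 < a)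
    (hg : ContinuousOn g (Ioi a)) (hbound : ∀ t ∈ Ioi a, |g t| ≤ C * t ^ s) :
    IntegrableOn g (Ioi a) := by
  refine Integrable.mono' ((integrableOn_Ioi_rpow_of_lt hs ha).const_mul C)
    (hg.aestronglyMeasurable measurableSet_Ioi) ?_
  filter_upwards [ae_restrict_mem measurableSet_Ioi] with t ht
  exact hbound t ht

theorem integrableOn_Ioi_div_rpow_one_add {w : ℝ → ℝ} {α K B : ℝ} (hα : α ∈ Ioo 0 1)
    (hw : ContinuousOn w (Ioi 0)) (hK : ∀ t > 0, |w t| ≤ K * t) (hB : ∀ t > 0, |w t| ≤ B) :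
    IntegrableOn (fun t => w t / t ^ (1 + α)) (Ioi 0) := by
  have hcont : ContinuousOn (fun t => w t / t ^ (1 + α)) (Ioi 0) :=
    hw.div (continuousOn_id.rpow_const fun _ _ => Or.inr (by linarith [hα.1]))
      fun t ht => (rpow_pos_of_pos ht _).ne'
  have hnear : IntegrableOn (fun t => w t / t ^ (1 + α)) (Ioc 0 1) := by
    refine integrableOn_Ioc_zero_of_abs_le_rpow (C := K) (s := -α) (by linarith [hα.2])
      (hcont.mono Ioc_subset_Ioi_self) fun t ht => ?_
    calc |w t / t ^ (1 + α)| ≤ K * t * t ^ (-(1 + α)) := abs_div_rpow_le ht.1 (hK t ht.1)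
      _ = K * t ^ (-α) := by
        rw [mul_assoc, ← rpow_one_add' ht.1.le (by linarith [hα.1] : (1 : ℝ) + -(1 + α) < 0).ne]
        ring_nf
  have hfar : IntegrableOn (fun t => w t / t ^ (1 + α)) (Ioi 1) :=
    integrableOn_Ioi_of_abs_le_rpow (by linarith [hα.1]) one_pos
      (hcont.mono (Ioi_subset_Ioi zero_le_one))
      fun t ht => abs_div_rpow_le (one_pos.trans ht) (hB t (one_pos.trans ht))
  simpa only [Ioc_union_Ioi_eq_Ioi zero_le_one] using hnear.union hfar

theorem integral_Ioc_deriv_div_rpow {w w' : ℝ → ℝ} {α K R : ℝ} (hα : α < 1) (hR : 0 ≤ R)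
    (hw : ∀ t ∈ Ioc 0 R, HasDerivAt w (w' t) t) (hK : ∀ t ∈ Icc 0 R, |w t| ≤ K * t)
    (hint' : IntegrableOn (fun t => w' t / t ^ α) (Ioc 0 R))
    (hint : IntegrableOn (fun t => w t / t ^ (1 + α)) (Ioc 0 R)) :
    ∫ t in Ioc 0 R, w' t / t ^ α = w R / R ^ α + α * ∫ t in Ioc 0 R, w t / t ^ (1 + α) := by
  set F : ℝ → ℝ := fun t => w t * t ^ (-α)
  have hw0 : w 0 = 0 := abs_nonpos_iff.1 (by simpa using hK 0 ⟨le_rfl, hR⟩)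
  have hF_bound : ∀ t ∈ Ioc 0 R, |F t| ≤ K * t ^ (1 - α) := fun t ht => by
    rw [abs_mul, abs_of_pos (rpow_pos_of_pos ht.1 _), sub_eq_add_neg, rpow_add ht.1, rpow_one,
      ← mul_assoc]
    exact mul_le_mul_of_nonneg_right (hK t (Ioc_subset_Icc_self ht)) (rpow_nonneg ht.1.le _)
  have hF_cont : ContinuousOn F (Icc 0 R) := by
    intro t ht
    rcases ht.1.eq_or_lt with rfl | ht0
    · rw [← continuousWithinAt_sdiff_self, Icc_sdiff_left, ContinuousWithinAt]
      have hlim : Tendsto (fun t : ℝ => K * t ^ (1 - α)) (𝓝[Ioc 0 R] 0) (𝓝 0) := by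
        simpa [zero_rpow (sub_ne_zero.2 hα.ne')] using
          ((continuousAt_rpow_const 0 (1 - α) (Or.inr (by linarith))).tendsto.const_mul K).mono_left
            nhdsWithin_le_nhds
      simp only [F, hw0, zero_mul]
      exact squeeze_zero_norm' (eventually_nhdsWithin_of_forall hF_bound) hlim
    · exact ((hw t ⟨ht0, ht.2⟩).continuousAt.mul
        (continuousAt_rpow_const _ _ (Or.inl ht0.ne'))).continuousWithinAt
  have hF_deriv : ∀ t ∈ Ioo 0 R,
      HasDerivAt F (w' t / t ^ α - α * (w t / t ^ (1 + α))) t := fun t ht => by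
    refine ((hw t (Ioo_subset_Ioc_self ht)).mul
      (hasDerivAt_rpow_const (Or.inl ht.1.ne'))).congr_deriv ?_
    rw [rpow_neg ht.1.le, show -α - 1 = -(1 + α) by ring, rpow_neg ht.1.le]
    ring
  have hFTC := intervalIntegral.integral_eq_sub_of_hasDerivAt_of_le hR hF_cont hF_deriv
    ((intervalIntegrable_iff_integrableOn_Ioc_of_le hR).2 (hint'.sub (hint.const_mul α)))
  rw [intervalIntegral.integral_of_le hR, integral_sub hint' (hint.const_mul α),
    integral_const_mul] at hFTC
  simp only [F, hw0, zero_mul, sub_zero, rpow_neg hR, ← div_eq_mul_inv] at hFTC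
  linarith

theorem tendsto_integral_Ioc_deriv_div_rpow {w w' : ℝ → ℝ} {α K B B' : ℝ} (hα : α ∈ Ioo 0 1)
    (hw : ∀ t > 0, HasDerivAt w (w' t) t) (hw' : ContinuousOn w' (Ioi 0))
    (hK : ∀ t ≥ 0, |w t| ≤ K * t) (hB : ∀ t > 0, |w t| ≤ B) (hB' : ∀ t > 0, |w' t| ≤ B') :
    Tendsto (fun R => ∫ t in Ioc 0 R, w' t / t ^ α) atTop
      (𝓝 (α * ∫ t in Ioi 0, w t / t ^ (1 + α))) := by
  have hint := integrableOn_Ioi_div_rpow_one_add hα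
    (fun t ht => (hw t ht).continuousAt.continuousWithinAt) (fun t ht => hK t ht.le) hB
  have hint' (R : ℝ) : IntegrableOn (fun t => w' t / t ^ α) (Ioc 0 R) :=
    integrableOn_Ioc_zero_of_abs_le_rpow (by linarith [hα.2])
      ((hw'.mono Ioc_subset_Ioi_self).div (continuousOn_id.rpow_const fun t ht => Or.inl ht.1.ne')
        fun t ht => (rpow_pos_of_pos ht.1 _).ne')
      fun t ht => abs_div_rpow_le ht.1 (hB' t ht.1)
  have hboundary : Tendsto (fun R => w R / R ^ α) atTop (𝓝 0) := by
    refine squeeze_zero_norm' ?_ (by simpa using (tendsto_rpow_neg_atTop hα.1).const_mul B)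
    filter_upwards [eventually_gt_atTop 0] with R hR
    exact abs_div_rpow_le hR (hB R hR)
  have htail : Tendsto (fun R => ∫ t in Ioc 0 R, w t / t ^ (1 + α)) atTop
      (𝓝 (∫ t in Ioi 0, w t / t ^ (1 + α))) := by
    refine (intervalIntegral_tendsto_integral_Ioi 0 hint tendsto_id).congr' ?_
    filter_upwards [eventually_ge_atTop 0] with R hR
    exact intervalIntegral.integral_of_le hR
  refine (zero_add (α * _) ▸ hboundary.add (htail.const_mul α)).congr' ?_
  filter_upwards [eventually_ge_atTop 0] with R hR
  exact (integral_Ioc_deriv_div_rpow hα.2 hR (fun t ht => hw t ht.1) (fun t ht => hK t ht.1)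
    (hint' R) (hint.mono_set Ioc_subset_Ioi_self)).symm

theorem integral_Iio_zero_eq_integral_Ioi_comp_neg (f : ℝ → ℝ) :
    ∫ z in Iio 0, f z = ∫ t in Ioi 0, f (-t) := by
  rw [integral_comp_neg_Ioi, neg_zero, integral_Iic_eq_integral_Iio]

theorem Real.div_Gamma_one_sub {α : ℝ} (hα : α ≠ 0) : α / Gamma (1 - α) = -(1 / Gamma (-α)) := by
  rw [show 1 - α = -α + 1 by ring, Gamma_add_one (neg_ne_zero.2 hα)]
  rcases eq_or_ne (Gamma (-α)) 0 with h | h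
  · simp [h]
  · field_simp

/-- For `α ∈ (0,1)`, `u : ℝ → ℝ` bounded, C¹ with bounded derivative, and `x ∈ ℝ`,
`(1/Γ(−α)) ∫_{−∞}^{0} (u(x+z) − u(x))/|z|^{1+α} dz
  = (1/Γ(1−α)) · lim_{R→∞} ∫_{0}^{R} u'(x−z)/z^{α} dz`,
the improper integral on the right converging to the stated value. -/
theorem weylMarchaud_repr
    (α : ℝ) (hα : α ∈ Set.Ioo (0:ℝ) 1)
    (u : ℝ → ℝ) (hu : ContDiff ℝ 1 u)
    (hub : ∃ M, ∀ y, |u y| ≤ M)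
    (hub' : ∃ M, ∀ y, |deriv u y| ≤ M)
    (x : ℝ) :
    Tendsto
      (fun R : ℝ => (1 / Real.Gamma (1 - α)) * ∫ z in Ioc (0:ℝ) R, deriv u (x - z) / z ^ α)
      atTop
      (𝓝 ((1 / Real.Gamma (-α)) *
        ∫ z in Iio (0:ℝ), (u (x + z) - u x) / |z| ^ (1 + α))) := by
  obtain ⟨M, hM⟩ := hub
  obtain ⟨M', hM'⟩ := hub'
  have hud : Differentiable ℝ u := hu.differentiable one_ne_zero
  set w : ℝ → ℝ := fun t => u x - u (x - t)
  have hw (t : ℝ) : HasDerivAt w (deriv u (x - t)) t := by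
    simpa using ((hud (x - t)).hasDerivAt.comp t ((hasDerivAt_id t).const_sub x)).const_sub (u x)
  have hK (t : ℝ) (ht : 0 ≤ t) : |w t| ≤ M' * t := by
    simpa [w, abs_of_nonneg ht] using convex_univ.norm_image_sub_le_of_norm_deriv_le
      (fun y _ => hud y) (fun y _ => hM' y) (mem_univ (x - t)) (mem_univ x)
  have hB (t : ℝ) : |w t| ≤ M + M := (abs_sub _ _).trans (add_le_add (hM _) (hM _))
  have hlim := tendsto_integral_Ioc_deriv_div_rpow hα (fun t _ => hw t)
    ((hu.continuous_deriv le_rfl).comp (continuous_sub_left x)).continuousOn hK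
    (fun t _ => hB t) (fun t _ => hM' _)
  convert hlim.const_mul (1 / Real.Gamma (1 - α)) using 2
  rw [integral_Iio_zero_eq_integral_Ioi_comp_neg, ← mul_assoc, one_div_mul_eq_div _ α,
    div_Gamma_one_sub hα.1.ne', neg_mul, ← mul_neg, ← integral_neg]
  refine congrArg _ (setIntegral_congr_fun measurableSet_Ioi fun t ht => ?_)
  simp only [w, abs_neg, abs_of_pos (show (0:ℝ) < t from ht), ← sub_eq_add_neg]
  ring
end

section
/- Let α ∈ (0,1), let u : ℝ → ℝ be twice continuously differentiable with u, u', u'' bounded, and let x ∈ ℝ. Then (1/Γ(−1−α)) ∫_{0}^{∞} (u(x−z) − u(x) + u'(x)·z)/z^{2+α} dz = (1/Γ(−α)) ∫_{0}^{∞} (u'(x−z) − u'(x))/z^{1+α} dz. -/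
/-!
Put `f z = u (x - z) - u x + u' x * z`, so that `f' z = -(u' (x - z) - u' x)`.
Integrating `d/dz (f z / z ^ (1 + α))` over `(0, ∞)` gives
`∫ (u' (x - z) - u' x) / z ^ (1 + α) = -(1 + α) ∫ f z / z ^ (2 + α)`: the boundary terms
vanish because `f z = O(z²)` at `0` (bounded `u''`) and `f z = O(z)` at `∞` (bounded `u'`),
and these bounds with `0 < α < 1` make both integrals converge. The Gamma factors match by
`Γ(-α) = (-1 - α) Γ(-1 - α)`.
-/

open MeasureTheory Set Filter Topology

lemma abs_div_rpow_le_s1 {y z a c A : ℝ} (hz : 0 < z) (h : |y| ≤ A * z ^ a) :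
    |y / z ^ c| ≤ A * z ^ (a - c) := by
  rw [abs_div, abs_of_pos (Real.rpow_pos_of_pos hz c), Real.rpow_sub hz, ← mul_div_assoc]
  exact div_le_div_of_nonneg_right h (Real.rpow_nonneg hz.le c)

lemma integrableOn_Ioi_zero_of_abs_le_rpow {g : ℝ → ℝ} (hg : ContinuousOn g (Ioi 0))
    {a b A B : ℝ} (ha : -1 < a) (hb : b < -1)
    (h0 : ∀ z ∈ Ioc (0:ℝ) 1, |g z| ≤ A * z ^ a)
    (h1 : ∀ z ∈ Ioi (1:ℝ), |g z| ≤ B * z ^ b) :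
    IntegrableOn g (Ioi 0) := by
  have hIoc : IntegrableOn g (Ioc 0 1) := by
    refine Integrable.mono' ((intervalIntegral.intervalIntegrable_rpow' ha).1.const_mul A)
      ((hg.mono Ioc_subset_Ioi_self).aestronglyMeasurable measurableSet_Ioc) ?_
    filter_upwards [ae_restrict_mem measurableSet_Ioc] with z hz using h0 z hz
  have hIoi : IntegrableOn g (Ioi 1) := by
    refine Integrable.mono' ((integrableOn_Ioi_rpow_of_lt hb one_pos).const_mul B)
      ((hg.mono (Ioi_subset_Ioi zero_le_one)).aestronglyMeasurable measurableSet_Ioi) ?_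
    filter_upwards [ae_restrict_mem measurableSet_Ioi] with z hz using h1 z hz
  simpa only [Ioc_union_Ioi_eq_Ioi zero_le_one] using hIoc.union hIoi

lemma integrableOn_Ioi_zero_div_rpow {g : ℝ → ℝ} (hg : ContinuousOn g (Ioi 0))
    {a b c A B : ℝ} (ha : c - 1 < a) (hb : b < c - 1)
    (h_a : ∀ z ∈ Ioi (0:ℝ), |g z| ≤ A * z ^ a)
    (h_b : ∀ z ∈ Ioi (0:ℝ), |g z| ≤ B * z ^ b) :
    IntegrableOn (fun z ↦ g z / z ^ c) (Ioi 0) := by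
  refine integrableOn_Ioi_zero_of_abs_le_rpow
    (hg.div (continuousOn_id.rpow_const fun z hz ↦ Or.inl (ne_of_gt hz))
      fun z hz ↦ (Real.rpow_pos_of_pos hz c).ne')
    (a := a - c) (b := b - c) (A := A) (B := B) (by linarith) (by linarith) ?_ ?_
  · exact fun z hz ↦ abs_div_rpow_le_s1 hz.1 (h_a z hz.1)
  · intro z hz
    have hz0 : 0 < z := zero_lt_one.trans hz
    exact abs_div_rpow_le_s1 hz0 (h_b z hz0)

lemma tendsto_nhdsGT_zero_of_abs_le_rpow {g : ℝ → ℝ} {a A : ℝ} (ha : 0 < a)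
    (h : ∀ z ∈ Ioi (0:ℝ), |g z| ≤ A * z ^ a) : Tendsto g (𝓝[>] 0) (𝓝 0) := by
  have hlim : Tendsto (fun z : ℝ ↦ A * z ^ a) (𝓝[>] 0) (𝓝 0) := by
    have := (Real.continuousAt_rpow_const 0 a (Or.inr ha.le)).const_mul A
    simpa [Real.zero_rpow ha.ne'] using this.mono_left nhdsWithin_le_nhds
  exact squeeze_zero_norm' (eventually_nhdsWithin_of_forall h) hlim

lemma tendsto_atTop_zero_of_abs_le_rpow {g : ℝ → ℝ} {a A : ℝ} (ha : a < 0)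
    (h : ∀ z ∈ Ioi (0:ℝ), |g z| ≤ A * z ^ a) : Tendsto g atTop (𝓝 0) := by
  have hlim : Tendsto (fun z : ℝ ↦ A * z ^ a) atTop (𝓝 0) := by
    simpa using (tendsto_rpow_neg_atTop (neg_pos.2 ha)).const_mul A
  exact squeeze_zero_norm' ((eventually_gt_atTop 0).mono h) hlim

lemma HasDerivAt.div_rpow {f : ℝ → ℝ} {f' z : ℝ} (hf : HasDerivAt f f' z) (hz : 0 < z)
    (c : ℝ) :
    HasDerivAt (fun z ↦ f z / z ^ c) (f' / z ^ c - c * (f z / z ^ (c + 1))) z := by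
  refine (hf.div (Real.hasDerivAt_rpow_const (p := c) (Or.inl hz.ne'))
    (Real.rpow_pos_of_pos hz c).ne').congr_deriv ?_
  have hzc := (Real.rpow_pos_of_pos hz c).ne'
  rw [Real.rpow_sub_one hz.ne', Real.rpow_add_one hz.ne']
  field_simp

theorem integral_Ioi_zero_deriv_div_rpow {f f' : ℝ → ℝ} {c : ℝ} (hc : c ≠ 0)
    (hderiv : ∀ z ∈ Ioi (0:ℝ), HasDerivAt f (f' z) z)
    (h_zero : Tendsto (fun z ↦ f z / z ^ c) (𝓝[>] 0) (𝓝 0))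
    (h_top : Tendsto (fun z ↦ f z / z ^ c) atTop (𝓝 0))
    (hf'_int : IntegrableOn (fun z ↦ f' z / z ^ c) (Ioi 0))
    (hf_int : IntegrableOn (fun z ↦ f z / z ^ (c + 1)) (Ioi 0)) :
    ∫ z in Ioi 0, f' z / z ^ c = c * ∫ z in Ioi 0, f z / z ^ (c + 1) := by
  -- `0 ^ c = 0` for `c ≠ 0`, so the limit at `0⁺` makes the quotient continuous on `[0, ∞)`.
  have hval : f 0 / (0:ℝ) ^ c = 0 := by rw [Real.zero_rpow hc, div_zero]
  have hcont : ContinuousWithinAt (fun z ↦ f z / z ^ c) (Ici 0) 0 :=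
    continuousWithinAt_Ioi_iff_Ici.1 (by rwa [ContinuousWithinAt, hval])
  have hFTC := integral_Ioi_of_hasDerivAt_of_tendsto hcont
    (fun z hz ↦ (hderiv z hz).div_rpow hz c) (hf'_int.sub (hf_int.const_mul c)) h_top
  rw [hval, sub_zero, integral_sub hf'_int (hf_int.const_mul c), integral_const_mul] at hFTC
  exact sub_eq_zero.1 hFTC

lemma abs_sub_le_of_abs_deriv_le {φ : ℝ → ℝ} {C : ℝ} (hφ : Differentiable ℝ φ)
    (hC : ∀ y, |deriv φ y| ≤ C) (a b : ℝ) : |φ b - φ a| ≤ C * |b - a| :=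
  convex_univ.norm_image_sub_le_of_norm_deriv_le (fun y _ ↦ hφ y) (fun y _ ↦ hC y)
    (mem_univ a) (mem_univ b)

lemma hasDerivAt_sub_add_deriv_mul {u : ℝ → ℝ} {x z : ℝ}
    (hu : DifferentiableAt ℝ u (x - z)) :
    HasDerivAt (fun z ↦ u (x - z) - u x + deriv u x * z) (deriv u x - deriv u (x - z)) z := by
  have hcomp := hu.hasDerivAt.comp z ((hasDerivAt_id z).const_sub x)
  refine ((hcomp.sub_const (u x)).add ((hasDerivAt_id z).const_mul (deriv u x))).congr_deriv ?_
  ring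

lemma abs_sub_add_deriv_mul_le {u : ℝ → ℝ} {C : ℝ} (hu : Differentiable ℝ u)
    (hC : ∀ y, |deriv u y| ≤ C) (x z : ℝ) :
    |u (x - z) - u x + deriv u x * z| ≤ 2 * C * |z| := by
  have h1 : |u (x - z) - u x| ≤ C * |z| := by
    simpa [abs_sub_comm] using abs_sub_le_of_abs_deriv_le hu hC x (x - z)
  have h2 : |deriv u x * z| ≤ C * |z| := by
    rw [abs_mul]; exact mul_le_mul_of_nonneg_right (hC x) (abs_nonneg z)
  linarith [abs_add_le (u (x - z) - u x) (deriv u x * z)]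

lemma abs_sub_add_deriv_mul_le_sq {u : ℝ → ℝ} {C : ℝ} (hu : Differentiable ℝ u)
    (hu' : Differentiable ℝ (deriv u)) (hC : ∀ y, |deriv (deriv u) y| ≤ C) (x z : ℝ) :
    |u (x - z) - u x + deriv u x * z| ≤ C * z ^ 2 := by
  have hbound : ∀ w ∈ uIcc 0 z, ‖deriv u x - deriv u (x - w)‖ ≤ C * |z| := fun w hw ↦ by
    calc |deriv u x - deriv u (x - w)| ≤ C * |x - (x - w)| :=
          abs_sub_le_of_abs_deriv_le hu' hC _ _
      _ ≤ C * |z| := by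
        rw [sub_sub_cancel]
        exact mul_le_mul_of_nonneg_left (by simpa using abs_sub_left_of_mem_uIcc hw)
          ((abs_nonneg _).trans (hC 0))
  simpa [sq_abs, pow_two, mul_assoc] using
    (convex_uIcc 0 z).norm_image_sub_le_of_norm_hasDerivWithin_le
      (fun w _ ↦ (hasDerivAt_sub_add_deriv_mul (hu (x - w))).hasDerivWithinAt) hbound
      left_mem_uIcc right_mem_uIcc

theorem integral_deriv_sub_div_rpow_eq {u : ℝ → ℝ} {M₁ M₂ α : ℝ} (hα : α ∈ Ioo 0 1)
    (hu : Differentiable ℝ u) (hu' : Differentiable ℝ (deriv u))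
    (hM₁ : ∀ y, |deriv u y| ≤ M₁) (hM₂ : ∀ y, |deriv (deriv u) y| ≤ M₂) (x : ℝ) :
    ∫ z in Ioi 0, (deriv u (x - z) - deriv u x) / z ^ (1 + α)
      = -((1 + α) * ∫ z in Ioi 0, (u (x - z) - u x + deriv u x * z) / z ^ (2 + α)) := by
  obtain ⟨hα0, hα1⟩ := hα
  set f : ℝ → ℝ := fun z ↦ u (x - z) - u x + deriv u x * z
  set v : ℝ → ℝ := fun z ↦ deriv u (x - z) - deriv u x
  have hf_sq : ∀ z ∈ Ioi (0:ℝ), |f z| ≤ M₂ * z ^ (2:ℝ) := fun z _ ↦ by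
    simpa [Real.rpow_two] using abs_sub_add_deriv_mul_le_sq hu hu' hM₂ x z
  have hf_lin : ∀ z ∈ Ioi (0:ℝ), |f z| ≤ 2 * M₁ * z ^ (1:ℝ) := fun z (hz : 0 < z) ↦ by
    simpa [f, abs_of_pos hz] using abs_sub_add_deriv_mul_le hu hM₁ x z
  have hv_lin : ∀ z ∈ Ioi (0:ℝ), |v z| ≤ M₂ * z ^ (1:ℝ) := fun z (hz : 0 < z) ↦ by
    simpa [v, abs_of_pos hz] using abs_sub_le_of_abs_deriv_le hu' hM₂ x (x - z)
  have hv_bdd : ∀ z ∈ Ioi (0:ℝ), |v z| ≤ 2 * M₁ * z ^ (0:ℝ) := fun z _ ↦ by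
    rw [Real.rpow_zero, mul_one]
    linarith [abs_sub (deriv u (x - z)) (deriv u x), hM₁ x, hM₁ (x - z)]
  have hu_cont := hu.continuous
  have hu'_cont := hu'.continuous
  have hf_int : IntegrableOn (fun z ↦ f z / z ^ (2 + α)) (Ioi 0) :=
    integrableOn_Ioi_zero_div_rpow (by fun_prop) (by linarith) (by linarith) hf_sq hf_lin
  have hv_int : IntegrableOn (fun z ↦ v z / z ^ (1 + α)) (Ioi 0) :=
    integrableOn_Ioi_zero_div_rpow (by fun_prop) (by linarith) (by linarith) hv_lin hv_bdd
  have hIBP := integral_Ioi_zero_deriv_div_rpow (f := f) (f' := fun z ↦ -v z) (c := 1 + α)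
    (by linarith) (fun z _ ↦ by simpa [v] using hasDerivAt_sub_add_deriv_mul (hu (x - z)))
    (tendsto_nhdsGT_zero_of_abs_le_rpow (a := 2 - (1 + α)) (by linarith)
      fun z hz ↦ abs_div_rpow_le_s1 hz (hf_sq z hz))
    (tendsto_atTop_zero_of_abs_le_rpow (a := 1 - (1 + α)) (by linarith)
      fun z hz ↦ abs_div_rpow_le_s1 hz (hf_lin z hz))
    (by simp only [neg_div]; exact hv_int.neg)
    (by rwa [show 1 + α + 1 = 2 + α by ring])
  rw [show 1 + α + 1 = 2 + α by ring] at hIBP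
  simp only [neg_div, integral_neg] at hIBP
  exact neg_eq_iff_eq_neg.1 hIBP

theorem xDax_repr_general
    (α : ℝ) (hα : α ∈ Set.Ioo (0:ℝ) 1)
    (u : ℝ → ℝ) (hu : ContDiff ℝ 2 u)
    (hub' : ∃ M, ∀ y, |deriv u y| ≤ M)
    (hub'' : ∃ M, ∀ y, |deriv (deriv u) y| ≤ M)
    (x : ℝ) :
    (1 / Real.Gamma (-1 - α)) *
        (∫ z in Ioi (0:ℝ), (u (x - z) - u x + deriv u x * z) / z ^ (2 + α))
      = (1 / Real.Gamma (-α)) *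
        (∫ z in Ioi (0:ℝ), (deriv u (x - z) - deriv u x) / z ^ (1 + α)) := by
  obtain ⟨M₁, hM₁⟩ := hub'
  obtain ⟨M₂, hM₂⟩ := hub''
  have hne : -1 - α ≠ 0 := by linarith [hα.1]
  have hΓ : Real.Gamma (-α) = (-1 - α) * Real.Gamma (-1 - α) := by
    rw [show -α = -1 - α + 1 by ring]
    exact Real.Gamma_add_one hne
  rw [hΓ, integral_deriv_sub_div_rpow_eq hα (hu.differentiable two_ne_zero)
    hu.differentiable_deriv_two hM₁ hM₂ x, one_div_mul_eq_div, one_div_mul_eq_div,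
    neg_mul_eq_neg_mul, neg_add', mul_div_mul_left _ _ hne]

/-- For `α ∈ (0,1)`, `u : ℝ → ℝ` C² with `u`, `u'`, `u''` bounded, and `x ∈ ℝ`,
`(1/Γ(−1−α)) ∫_{0}^{∞} (u(x−z) − u(x) + u'(x)·z)/z^{2+α} dz
  = (1/Γ(−α)) ∫_{0}^{∞} (u'(x−z) − u'(x))/z^{1+α} dz`. -/
theorem xDax_repr
    (α : ℝ) (hα : α ∈ Set.Ioo (0:ℝ) 1)
    (u : ℝ → ℝ) (hu : ContDiff ℝ 2 u)
    (hub : ∃ M, ∀ y, |u y| ≤ M)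
    (hub' : ∃ M, ∀ y, |deriv u y| ≤ M)
    (hub'' : ∃ M, ∀ y, |deriv (deriv u) y| ≤ M)
    (x : ℝ) :
    (1 / Real.Gamma (-1 - α)) *
        (∫ z in Ioi (0:ℝ), (u (x - z) - u x + deriv u x * z) / z ^ (2 + α))
      = (1 / Real.Gamma (-α)) *
        (∫ z in Ioi (0:ℝ), (deriv u (x - z) - deriv u x) / z ^ (1 + α)) :=
  xDax_repr_general α hα u hu hub' hub'' x
end

section
/- Let α ∈ (0,1), let u : ℝ → ℝ be twice continuously differentiable with u, u', u'' bounded, and let x ∈ ℝ. Then (1/Γ(−α)) ∫_{0}^{∞} (u'(x−z) − u'(x))/z^{1+α} dz = (1/Γ(1−α)) · lim_{R→∞} ∫_{0}^{R} u''(x−z)/z^{α} dz; in particular the improper integral on the right converges. -/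
open MeasureTheory Set Filter Topology

/-! With `g z = u' x - u' (x - z)` we have `g 0 = 0` and `g' z = u'' (x - z)`, so integrating by
parts against `z ^ (-α)` gives
`∫₀ᴿ g' z / z ^ α = g R / R ^ α + α ∫₀ᴿ g z / z ^ (1 + α)`.
The boundary term at `0` vanishes because `|g z| ≤ ‖u''‖∞ z` and `α < 1`, and the one at `∞`
because `g` is bounded and `α > 0`; the same two bounds make `g z / z ^ (1 + α)` integrable on
`(0, ∞)`. Finally `Γ (1 - α) = -α Γ (-α)`. -/

section FractionalByParts

variable {α L : ℝ} {g : ℝ → ℝ}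

lemma abs_le_mul_abs_of_abs_deriv_le (hg : Differentiable ℝ g) (hg0 : g 0 = 0)
    (hg' : ∀ z, |deriv g z| ≤ L) (z : ℝ) : |g z| ≤ L * |z| := by
  simpa [hg0, Real.norm_eq_abs] using Convex.norm_image_sub_le_of_norm_deriv_le
    (fun y _ => hg y) (fun y _ => hg' y) convex_univ (mem_univ 0) (mem_univ z)

lemma integrableOn_div_rpow_Ioc (hα : α < 1) (hg : AEStronglyMeasurable g)
    (hbound : ∀ z, |g z| ≤ L) (R : ℝ) :
    IntegrableOn (fun z => g z / z ^ α) (Ioc 0 R) := by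
  have hrpow : IntegrableOn (fun z : ℝ => z ^ (-α)) (Ioc 0 R) :=
    (intervalIntegral.intervalIntegrable_rpow' (by linarith : (-1:ℝ) < -α)).1
  have hmul : IntegrableOn (fun z => g z * z ^ (-α)) (Ioc 0 R) :=
    hrpow.bdd_mul (c := L) hg.restrict
      (.of_forall fun z => by simpa [Real.norm_eq_abs] using hbound z)
  refine hmul.congr_fun (fun z hz => ?_) measurableSet_Ioc
  simp only [Real.rpow_neg hz.1.le, div_eq_mul_inv]

lemma integrableOn_div_rpow_one_add_Ioc (hα : α < 1) (hg : Continuous g)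
    (hlin : ∀ z, |g z| ≤ L * |z|) (R : ℝ) :
    IntegrableOn (fun z => g z / z ^ (1 + α)) (Ioc 0 R) := by
  have hbd : IntegrableOn (fun z : ℝ => L * z ^ (-α)) (Ioc 0 R) :=
    (intervalIntegral.intervalIntegrable_rpow' (by linarith : (-1:ℝ) < -α)).1.const_mul L
  refine hbd.integrable.mono' ?_
    ((ae_restrict_iff' measurableSet_Ioc).2 (.of_forall fun z hz => ?_))
  · exact (hg.measurable.div (measurable_id.pow_const _))
      |>.aestronglyMeasurable.restrict
  · have hz : 0 < z := hz.1
    have hpow : z ^ (1 + α) = z * z ^ α := by rw [Real.rpow_add hz, Real.rpow_one]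
    rw [Real.norm_eq_abs, abs_div, abs_of_pos (Real.rpow_pos_of_pos hz _), hpow,
      Real.rpow_neg hz.le, div_le_iff₀ (by positivity)]
    calc |g z| ≤ L * z := by simpa [abs_of_pos hz] using hlin z
    _ = L * (z ^ α)⁻¹ * (z * z ^ α) := by field_simp

lemma integrableOn_div_rpow_one_add_Ioi_one (hα : 0 < α) (hg : Continuous g)
    (hbound : ∀ z, |g z| ≤ L) :
    IntegrableOn (fun z => g z / z ^ (1 + α)) (Ioi 1) := by
  have hbd : IntegrableOn (fun z : ℝ => L * z ^ (-(1 + α))) (Ioi 1) :=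
    (integrableOn_Ioi_rpow_of_lt (by linarith) one_pos).const_mul L
  refine hbd.integrable.mono' ?_
    ((ae_restrict_iff' measurableSet_Ioi).2 (.of_forall fun z hz => ?_))
  · exact (hg.measurable.div (measurable_id.pow_const _)).aestronglyMeasurable.restrict
  · have hpow : 0 < z ^ (1 + α) := Real.rpow_pos_of_pos (one_pos.trans hz) _
    rw [Real.norm_eq_abs, abs_div, abs_of_pos hpow, Real.rpow_neg (one_pos.trans hz).le,
      ← div_eq_mul_inv]
    exact div_le_div_of_nonneg_right (hbound z) hpow.le

lemma hasDerivAt_div_rpow {g' z : ℝ} (hg : HasDerivAt g g' z) (hz : 0 < z) :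
    HasDerivAt (fun t => g t / t ^ α) (g' / z ^ α - α * (g z / z ^ (1 + α))) z := by
  have hpow : HasDerivAt (fun t : ℝ => t ^ α) (α * z ^ (α - 1)) z :=
    Real.hasDerivAt_rpow_const (Or.inl hz.ne')
  refine (hg.div hpow (Real.rpow_pos_of_pos hz α).ne').congr_deriv ?_
  have h1 : z ^ (1 + α) = z * z ^ α := by rw [Real.rpow_add hz, Real.rpow_one]
  have h2 : z ^ α = z * z ^ (α - 1) := by
    simpa using Real.rpow_add hz 1 (α - 1)
  rw [h1, h2]
  field_simp

lemma tendsto_div_rpow_nhdsGT_zero (hα : α < 1) (hlin : ∀ z, |g z| ≤ L * |z|) :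
    Tendsto (fun z => g z / z ^ α) (𝓝[>] 0) (𝓝 0) := by
  have hbd : Tendsto (fun z : ℝ => L * z ^ (1 - α)) (𝓝[>] 0) (𝓝 0) := by
    have := (Real.continuousAt_rpow_const 0 (1 - α) (Or.inr (by linarith))).tendsto
    rw [Real.zero_rpow (by linarith)] at this
    simpa using (this.mono_left nhdsWithin_le_nhds).const_mul L
  refine squeeze_zero_norm' ?_ hbd
  filter_upwards [self_mem_nhdsWithin] with z (hz : 0 < z)
  have hpow : 0 < z ^ α := Real.rpow_pos_of_pos hz α
  rw [Real.norm_eq_abs, abs_div, abs_of_pos hpow, div_le_iff₀ hpow, mul_assoc,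
    ← Real.rpow_add hz, sub_add_cancel, Real.rpow_one]
  simpa [abs_of_pos hz] using hlin z

lemma tendsto_div_rpow_atTop_zero (hα : 0 < α) (hbound : ∀ z, |g z| ≤ L) :
    Tendsto (fun z => g z / z ^ α) atTop (𝓝 0) := by
  have hbd : Tendsto (fun z : ℝ => L * z ^ (-α)) atTop (𝓝 0) := by
    simpa using (tendsto_rpow_neg_atTop hα).const_mul L
  refine squeeze_zero_norm' ?_ hbd
  filter_upwards [eventually_gt_atTop 0] with z hz
  have hpow : 0 < z ^ α := Real.rpow_pos_of_pos hz α
  rw [Real.norm_eq_abs, abs_div, abs_of_pos hpow, Real.rpow_neg hz.le, ← div_eq_mul_inv]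
  exact div_le_div_of_nonneg_right (hbound z) hpow.le

lemma integral_Ioc_deriv_div_rpow_s2 (hα : α < 1) (hg : Differentiable ℝ g) (hg0 : g 0 = 0)
    (hg' : ∀ z, |deriv g z| ≤ L) {R : ℝ} (hR : 0 < R) :
    ∫ z in Ioc 0 R, deriv g z / z ^ α = g R / R ^ α + α * ∫ z in Ioc 0 R, g z / z ^ (1 + α) := by
  have hlin := abs_le_mul_abs_of_abs_deriv_le hg hg0 hg'
  have hI₁ := integrableOn_div_rpow_Ioc hα (measurable_deriv g).aestronglyMeasurable hg' R
  have hI₂ := integrableOn_div_rpow_one_add_Ioc hα hg.continuous hlin R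
  have hFTC := intervalIntegral.integral_eq_sub_of_hasDerivAt_of_tendsto hR
    (fun z hz => hasDerivAt_div_rpow (hg z).hasDerivAt hz.1)
    ((intervalIntegrable_iff_integrableOn_Ioc_of_le hR.le).2 (hI₁.sub (hI₂.const_mul α)))
    (tendsto_div_rpow_nhdsGT_zero hα hlin)
    ((hg.continuous.continuousAt.div (Real.continuousAt_rpow_const R α (Or.inl hR.ne'))
      (Real.rpow_pos_of_pos hR α).ne').continuousWithinAt)
  rw [intervalIntegral.integral_of_le hR.le, integral_sub hI₁ (hI₂.const_mul α),
    integral_const_mul, Pi.div_apply, sub_zero] at hFTC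
  linarith

theorem tendsto_integral_Ioc_deriv_div_rpow_s2 {B : ℝ} (hα : α ∈ Ioo 0 1) (hg : Differentiable ℝ g)
    (hg0 : g 0 = 0) (hgB : ∀ z, |g z| ≤ B) (hg' : ∀ z, |deriv g z| ≤ L) :
    Tendsto (fun R => ∫ z in Ioc 0 R, deriv g z / z ^ α) atTop
      (𝓝 (α * ∫ z in Ioi 0, g z / z ^ (1 + α))) := by
  have hI : IntegrableOn (fun z => g z / z ^ (1 + α)) (Ioi 0) := by
    rw [← Ioc_union_Ioi_eq_Ioi zero_le_one]
    exact (integrableOn_div_rpow_one_add_Ioc hα.2 hg.continuous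
      (abs_le_mul_abs_of_abs_deriv_le hg hg0 hg') 1).union
      (integrableOn_div_rpow_one_add_Ioi_one hα.1 hg.continuous hgB)
  have hIoc : Tendsto (fun R => ∫ z in Ioc 0 R, g z / z ^ (1 + α)) atTop
      (𝓝 (∫ z in Ioi 0, g z / z ^ (1 + α))) :=
    (intervalIntegral_tendsto_integral_Ioi 0 hI tendsto_id).congr'
      (by filter_upwards [eventually_ge_atTop 0] with R hR
          rw [id, intervalIntegral.integral_of_le hR])
  have hlim := (tendsto_div_rpow_atTop_zero hα.1 hgB).add (hIoc.const_mul α)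
  rw [zero_add] at hlim
  refine hlim.congr' ?_
  filter_upwards [eventually_gt_atTop 0] with R hR
  exact (integral_Ioc_deriv_div_rpow_s2 hα.2 hg hg0 hg' hR).symm

end FractionalByParts

-- Also true at the poles `0, -1, -2, …`, where `Real.Gamma` takes the junk value `0`.
lemma Real.one_div_Gamma_eq_self_mul_one_div_Gamma_add_one (s : ℝ) :
    1 / Real.Gamma s = s * (1 / Real.Gamma (s + 1)) := by
  rcases eq_or_ne s 0 with rfl | hs
  · simp
  rw [Real.Gamma_add_one hs]
  rcases eq_or_ne (Real.Gamma s) 0 with hΓ | hΓ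
  · simp [hΓ]
  · field_simp

theorem xDax_repr_second_general
    (α : ℝ) (hα : α ∈ Set.Ioo (0:ℝ) 1)
    (u : ℝ → ℝ) (hu : ContDiff ℝ 2 u)
    (hub' : ∃ M, ∀ y, |deriv u y| ≤ M)
    (hub'' : ∃ M, ∀ y, |deriv (deriv u) y| ≤ M)
    (x : ℝ) :
    Tendsto
      (fun R : ℝ => (1 / Real.Gamma (1 - α)) *
        ∫ z in Ioc (0:ℝ) R, deriv (deriv u) (x - z) / z ^ α)
      atTop
      (𝓝 ((1 / Real.Gamma (-α)) *
        ∫ z in Ioi (0:ℝ), (deriv u (x - z) - deriv u x) / z ^ (1 + α))) := by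
  obtain ⟨M₁, hM₁⟩ := hub'
  obtain ⟨M₂, hM₂⟩ := hub''
  have hu' : Differentiable ℝ (deriv u) :=
    (hu.iterate_deriv' 1 1).differentiable one_ne_zero
  set g : ℝ → ℝ := fun z => deriv u x - deriv u (x - z)
  have hg : Differentiable ℝ g := fun z =>
    ((hu' (x - z)).comp z (differentiableAt_id.const_sub x)).const_sub _
  have hg' : deriv g = fun z => deriv (deriv u) (x - z) := by
    ext z
    simp [g, deriv_comp_const_sub]
  have hlim := (tendsto_integral_Ioc_deriv_div_rpow_s2 hα hg (by simp [g])
    (fun z => (abs_sub _ _).trans (add_le_add (hM₁ x) (hM₁ (x - z))))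
    (fun z => by rw [hg']; exact hM₂ (x - z))).const_mul (1 / Real.Gamma (1 - α))
  rw [hg'] at hlim
  convert hlim using 2
  have hgI : ∫ z in Ioi 0, g z / z ^ (1 + α) =
      -∫ z in Ioi 0, (deriv u (x - z) - deriv u x) / z ^ (1 + α) := by
    rw [← integral_neg]
    simp only [g, ← neg_div, neg_sub]
  rw [hgI, Real.one_div_Gamma_eq_self_mul_one_div_Gamma_add_one (-α), neg_add_eq_sub]
  ring

/-- For `α ∈ (0,1)`, `u : ℝ → ℝ` C² with `u`, `u'`, `u''` bounded, and `x ∈ ℝ`,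
`(1/Γ(−α)) ∫_{0}^{∞} (u'(x−z) − u'(x))/z^{1+α} dz
  = (1/Γ(1−α)) · lim_{R→∞} ∫_{0}^{R} u''(x−z)/z^{α} dz`,
the improper integral on the right converging to the stated value. -/
theorem xDax_repr_second
    (α : ℝ) (hα : α ∈ Set.Ioo (0:ℝ) 1)
    (u : ℝ → ℝ) (hu : ContDiff ℝ 2 u)
    (hub : ∃ M, ∀ y, |u y| ≤ M)
    (hub' : ∃ M, ∀ y, |deriv u y| ≤ M)
    (hub'' : ∃ M, ∀ y, |deriv (deriv u) y| ≤ M)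
    (x : ℝ) :
    Tendsto
      (fun R : ℝ => (1 / Real.Gamma (1 - α)) *
        ∫ z in Ioc (0:ℝ) R, deriv (deriv u) (x - z) / z ^ α)
      atTop
      (𝓝 ((1 / Real.Gamma (-α)) *
        ∫ z in Ioi (0:ℝ), (deriv u (x - z) - deriv u x) / z ^ (1 + α))) :=
  xDax_repr_second_general α hα u hu hub' hub'' x
end

section
/- Let α ∈ (0,1) ∪ (1,2), let γ ∈ ℝ with |γ| ≤ min{α, 2−α}, and let ξ ∈ ℝ with ξ ≠ 0. Define c¹_{γ,α} = Γ(1+α)·sin((α−γ)π/2)/π and c²_{γ,α} = Γ(1+α)·sin((α+γ)π/2)/π. Then Γ(−α)·[c¹_{γ,α}·(iξ)^α + c²_{γ,α}·(−iξ)^α] = −|ξ|^α · e^{−i·sgn(ξ)·γπ/2}, where the complex powers (iξ)^α and (−iξ)^α are taken with the principal branch of the logarithm. -/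
/-!
For `ξ ≠ 0` with sign `s = ±1`, the principal branch gives `(±iξ)^α = |ξ|^α e^{±isαπ/2}`, so the
bracket is `Γ(1+α)/π · |ξ|^α` times `sin((α-γ)π/2) e^{isαπ/2} + sin((α+γ)π/2) e^{-isαπ/2}`, which the
addition formulas collapse to `sin(πα) e^{-isγπ/2}`. The reflection formula
`Γ(-α) Γ(1+α) = -π / sin(πα)`, valid since `α` is not an integer, turns the prefactor into `-1`.
-/

open Complex
open scoped Real

lemma Complex.arg_I_mul_ofReal {ξ : ℝ} (hξ : ξ ≠ 0) : arg (I * ξ) = Real.sign ξ * (π / 2) := by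
  rcases hξ.lt_or_gt with h | h
  · rw [show I * ξ = ((-ξ : ℝ) : ℂ) * -I by push_cast; ring, arg_real_mul _ (neg_pos.2 h),
      arg_neg_I, Real.sign_of_neg h]
    ring
  · rw [mul_comm, arg_real_mul _ h, arg_I, Real.sign_of_pos h, one_mul]

lemma Complex.I_mul_ofReal_cpow {ξ : ℝ} (hξ : ξ ≠ 0) (α : ℝ) :
    (I * ξ) ^ (α : ℂ) = (|ξ| ^ α : ℝ) * exp (Real.sign ξ * α * π / 2 * I) := by
  rw [cpow_ofReal, arg_I_mul_ofReal hξ, exp_mul_I]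
  push_cast
  simp only [norm_mul, norm_I, one_mul, norm_real, Real.norm_eq_abs]
  ring_nf

lemma Real.Gamma_neg_mul_Gamma_one_add (α : ℝ) :
    Gamma (-α) * Gamma (1 + α) = -(π / sin (π * α)) := by
  rw [← sub_neg_eq_add, Gamma_mul_Gamma_one_sub, mul_neg, sin_neg, div_neg]

lemma Real.sin_pi_mul_ne_zero {α : ℝ} (hα : ∀ n : ℤ, α ≠ n) : sin (π * α) ≠ 0 := by
  rw [Ne, sin_eq_zero_iff]
  rintro ⟨n, hn⟩
  exact hα n (mul_left_cancel₀ pi_ne_zero (by rw [← hn, mul_comm]))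

lemma Complex.sin_sub_mul_exp_add_sin_add_mul_exp (x y : ℂ) :
    sin (x - y) * exp (x * I) + sin (x + y) * exp (-x * I) = sin (2 * x) * exp (-y * I) := by
  simp only [exp_mul_I, cos_neg, sin_neg, sin_sub, sin_add, sin_two_mul]
  ring

lemma Complex.sin_mul_exp_add_sin_mul_exp_of_unit_sign {s : ℂ} (hs : s = -1 ∨ s = 1) (α γ : ℂ) :
    sin ((α - γ) * π / 2) * exp (s * α * π / 2 * I) + sin ((α + γ) * π / 2) * exp (-s * α * π / 2 * I)
      = sin (π * α) * exp (-I * s * γ * π / 2) := by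
  rcases hs with rfl | rfl
  · rw [add_comm]
    convert sin_sub_mul_exp_add_sin_add_mul_exp (α * π / 2) (-(γ * π / 2)) using 3 <;> ring_nf
  · convert sin_sub_mul_exp_add_sin_add_mul_exp (α * π / 2) (γ * π / 2) using 3 <;> ring_nf

theorem riesz_feller_symbol_general
    (α γ ξ : ℝ)
    (hα : α ∈ Set.Ioo (0:ℝ) 1 ∪ Set.Ioo (1:ℝ) 2)
    (hξ : ξ ≠ 0) :
    (Complex.ofReal (Real.Gamma (-α))) *
        (Complex.ofReal (Real.Gamma (1 + α) * Real.sin ((α - γ) * Real.pi / 2) / Real.pi) *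
            (Complex.I * (ξ : ℂ)) ^ (α : ℂ)
          + Complex.ofReal (Real.Gamma (1 + α) * Real.sin ((α + γ) * Real.pi / 2) / Real.pi) *
            (-(Complex.I * (ξ : ℂ))) ^ (α : ℂ))
      = -Complex.ofReal (|ξ| ^ α) *
          Complex.exp (-Complex.I * (Real.sign ξ : ℂ) * (γ : ℂ) * (Real.pi : ℂ) / 2) := by
  have hα_int : ∀ n : ℤ, α ≠ n := by
    rintro n rfl
    rcases hα with ⟨h0, h1⟩ | ⟨h1, h2⟩ <;> norm_cast at * <;> omega
  have hΓ : Real.Gamma (-α) * Real.Gamma (1 + α) / π * Real.sin (π * α) = -1 := by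
    rw [Real.Gamma_neg_mul_Gamma_one_add]
    field_simp [Real.sin_pi_mul_ne_zero hα_int]
  replace hΓ := congrArg ofReal hΓ
  have hneg : -(I * ξ) = I * ((-ξ : ℝ) : ℂ) := by push_cast; ring
  rw [hneg, I_mul_ofReal_cpow hξ, I_mul_ofReal_cpow (neg_ne_zero.2 hξ), abs_neg, Real.sign_neg]
  have hs : (Real.sign ξ : ℂ) = -1 ∨ (Real.sign ξ : ℂ) = 1 := by
    rcases Real.sign_apply_eq_of_ne_zero ξ hξ with h | h <;> simp [h]
  have bracket := sin_mul_exp_add_sin_mul_exp_of_unit_sign hs α γ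
  push_cast at hΓ ⊢
  linear_combination ((|ξ| ^ α : ℝ) * Real.Gamma (-α) * Real.Gamma (1 + α) / π : ℂ) * bracket
    + ((|ξ| ^ α : ℝ) * exp (-I * Real.sign ξ * γ * π / 2)) * hΓ

/-- For `α ∈ (0,1) ∪ (1,2)`, `|γ| ≤ min{α, 2−α}`, and real `ξ ≠ 0`, with
`c¹ = Γ(1+α)·sin((α−γ)π/2)/π` and `c² = Γ(1+α)·sin((α+γ)π/2)/π`,
`Γ(−α)·[c¹·(iξ)^α + c²·(−iξ)^α] = −|ξ|^α · e^{−i·sgn(ξ)·γπ/2}`,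
where the complex powers use the principal branch. -/
theorem riesz_feller_symbol
    (α γ ξ : ℝ)
    (hα : α ∈ Set.Ioo (0:ℝ) 1 ∪ Set.Ioo (1:ℝ) 2)
    (hγ : |γ| ≤ min α (2 - α))
    (hξ : ξ ≠ 0) :
    (Complex.ofReal (Real.Gamma (-α))) *
        (Complex.ofReal (Real.Gamma (1 + α) * Real.sin ((α - γ) * Real.pi / 2) / Real.pi) *
            (Complex.I * (ξ : ℂ)) ^ (α : ℂ)
          + Complex.ofReal (Real.Gamma (1 + α) * Real.sin ((α + γ) * Real.pi / 2) / Real.pi) *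
            (-(Complex.I * (ξ : ℂ))) ^ (α : ℂ))
      = -Complex.ofReal (|ξ| ^ α) *
          Complex.exp (-Complex.I * (Real.sign ξ : ℂ) * (γ : ℂ) * (Real.pi : ℂ) / 2) :=
  riesz_feller_symbol_general α γ ξ hα hξ
end

section
/- Let α ∈ (0,1), let k be a positive integer, and let x ∈ ℝ. Then ∑_{n=1}^{k} C(k−1, n−1) · C(−α, n) · (i−x)^{−n−α} · (2i)^{n−1} = −(α · e^{−iπ(1+α)/2}/(ix+1)^{1+α}) · ₂F₁(1−k, 1+α; 2; 2/(ix+1)), where C(−α, n) = (−α)(−α−1)⋯(−α−n+1)/n! is the generalized binomial coefficient and the complex powers (i−x)^{−n−α} and (ix+1)^{1+α} are taken with the principal branch of the logarithm. -/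
/-- Pochhammer symbol `(a)_n = a(a+1)⋯(a+n−1)`. -/
noncomputable def poch (a : ℂ) (n : ℕ) : ℂ := ∏ j ∈ Finset.range n, (a + j)

/-- Terminating Gaussian hypergeometric sum `₂F₁(−m, b; c; w)`. -/
noncomputable def F21 (m : ℕ) (b c w : ℂ) : ℂ :=
  ∑ n ∈ Finset.range (m + 1),
    poch (-(m : ℂ)) n * poch b n / (poch c n * (n.factorial : ℂ)) * w ^ n

/-- Generalized binomial coefficient `C(a, n) = a(a−1)⋯(a−n+1)/n!`. -/
noncomputable def genBinom (a : ℂ) (n : ℕ) : ℂ :=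
  (∏ j ∈ Finset.range n, (a - j)) / (n.factorial : ℂ)

/-!
Write `i - x = i w` with `w = i x + 1`. Since `Re w = 1 > 0`, the arguments of `i` and `w` add up
without leaving `(-π, π]`, so principal powers split: `(i w)^s = i^s w^s`, and
`i^(-n-α) = e^(-iπ(1+α)/2) (-i)^(n-1)`. The identity then holds summand by summand, using
`C(-α, m+1) = (-1)^(m+1) α (1+α)_m / (m+1)!`, `(-N)_m = (-1)^m m! C(N, m)` and `(2)_m = (m+1)!`.
-/

open Complex Finset Nat

lemma poch_succ' (a : ℂ) (m : ℕ) : poch a (m + 1) = a * poch (1 + a) m := by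
  simp only [poch, prod_range_succ', Nat.cast_add, Nat.cast_one, CharP.cast_eq_zero, add_zero]
  rw [mul_comm]
  congr 1
  exact prod_congr rfl fun j _ => by ring

lemma poch_one (m : ℕ) : poch 1 m = m ! := by
  rw [← prod_range_add_one_eq_factorial, poch]
  push_cast
  exact prod_congr rfl fun j _ => add_comm _ _

lemma poch_two (m : ℕ) : poch 2 m = (m + 1)! := by
  rw [← poch_one, poch_succ']; norm_num

lemma poch_neg (a : ℂ) (m : ℕ) : poch (-a) m = (-1) ^ m * ∏ j ∈ range m, (a - j) := by
  have h := prod_neg (s := range m) fun j : ℕ => a - j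
  rw [card_range] at h
  rw [poch, ← h]
  exact prod_congr rfl fun j _ => by ring

lemma poch_neg_natCast (N m : ℕ) : poch (-N) m = (-1) ^ m * (m ! * N.choose m) := by
  rw [poch_neg, ← descPochhammer_eval_eq_prod_range, descPochhammer_eval_eq_descFactorial,
    Nat.descFactorial_eq_factorial_mul_choose, Nat.cast_mul]

lemma genBinom_neg (a : ℂ) (n : ℕ) : genBinom (-a) n = (-1) ^ n * poch a n / n ! := by
  have h := prod_neg (s := range n) fun j : ℕ => a + j
  rw [card_range] at h
  rw [genBinom, poch, ← h]
  congr 1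
  exact prod_congr rfl fun j _ => by ring

lemma Finset.sum_Icc_one_eq_sum_range {M : Type*} [AddCommMonoid M] (k : ℕ) (f : ℕ → M) :
    ∑ n ∈ Icc 1 k, f n = ∑ m ∈ range k, f (m + 1) := by
  rw [range_eq_Ico, sum_Ico_add', ← Ico_add_one_right_eq_Icc]

lemma Complex.I_mul_cpow_of_re_pos {w : ℂ} (hw : 0 < w.re) (s : ℂ) :
    (I * w) ^ s = I ^ s * w ^ s := by
  have hw0 : w ≠ 0 := fun h => by simp [h] at hw
  have harg : |arg w| < Real.pi / 2 := abs_arg_lt_pi_div_two_iff.mpr (Or.inl hw)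
  have hsum : arg I + arg w ∈ Set.Ioc (-Real.pi) Real.pi := by
    rw [arg_I]; constructor <;> linarith [abs_lt.mp harg, Real.pi_pos]
  rw [cpow_def_of_ne_zero (mul_ne_zero I_ne_zero hw0), cpow_def_of_ne_zero I_ne_zero,
    cpow_def_of_ne_zero hw0, log_mul I_ne_zero hw0 hsum, add_mul, exp_add]

lemma Complex.I_cpow_neg_succ_sub (m : ℕ) (a : ℂ) :
    I ^ (-((m + 1 : ℕ) : ℂ) - a) = exp (-I * Real.pi * (1 + a) / 2) * (-I) ^ m := by
  have hnegI : exp (-I * Real.pi / 2) = -I := by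
    rw [show -I * Real.pi / 2 = -(Real.pi / 2 * I) by ring, exp_neg, exp_pi_div_two_mul_I]
    simp
  rw [cpow_def_of_ne_zero I_ne_zero, log_I,
    show Real.pi / 2 * I * (-((m + 1 : ℕ) : ℂ) - a)
      = -I * Real.pi * (1 + a) / 2 + m * (-I * Real.pi / 2) by push_cast; ring,
    exp_add, exp_nat_mul, hnegI]

lemma Complex.cpow_neg_succ_sub {w : ℂ} (hw : w ≠ 0) (m : ℕ) (a : ℂ) :
    w ^ (-((m + 1 : ℕ) : ℂ) - a) = (w ^ (1 + a))⁻¹ * (w ^ m)⁻¹ := by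
  rw [show -((m + 1 : ℕ) : ℂ) - a = -(1 + a) + -m by push_cast; ring,
    cpow_add _ _ hw, cpow_neg, cpow_neg, cpow_natCast]

lemma residue_summand_eq_F21_summand {w : ℂ} (hw : 0 < w.re) (N m : ℕ) (a : ℂ) :
    (N.choose m : ℂ) * genBinom (-a) (m + 1) * (I * w) ^ (-((m + 1 : ℕ) : ℂ) - a) *
        (2 * I) ^ m
      = -(a * exp (-I * Real.pi * (1 + a) / 2) / w ^ (1 + a)) *
          (poch (-N) m * poch (1 + a) m / (poch 2 m * m !) * (2 / w) ^ m) := by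
  have hw0 : w ≠ 0 := fun h => by simp [h] at hw
  have hpow : w ^ (1 + a) ≠ 0 := by simp [cpow_eq_zero_iff, hw0]
  have hI : (-I) ^ m * (2 * I) ^ m = 2 ^ m := by
    rw [← mul_pow, show -I * (2 * I) = 2 by linear_combination -2 * I_sq]
  rw [I_mul_cpow_of_re_pos hw, I_cpow_neg_succ_sub, cpow_neg_succ_sub hw0, genBinom_neg,
    poch_succ', poch_neg_natCast, poch_two, div_pow]
  have hm : (m ! : ℂ) ≠ 0 := Nat.cast_ne_zero.mpr (factorial_ne_zero m)
  have hm1 : ((m + 1)! : ℂ) ≠ 0 := Nat.cast_ne_zero.mpr (factorial_ne_zero (m + 1))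
  field_simp
  linear_combination (-1) ^ (m + 1) * a * N.choose m * poch (1 + a) m * hI

theorem residue_hypergeom_general
    (α : ℝ) (k : ℕ) (hk : 0 < k) (x : ℝ) :
    ∑ n ∈ Finset.Icc 1 k,
        ((k - 1).choose (n - 1) : ℂ) * genBinom (-(α : ℂ)) n *
          (Complex.I - (x : ℂ)) ^ (-(n : ℂ) - (α : ℂ)) * (2 * Complex.I) ^ (n - 1)
      = -((α : ℂ) * Complex.exp (-Complex.I * (Real.pi : ℂ) * (1 + (α : ℂ)) / 2) /
            (Complex.I * (x : ℂ) + 1) ^ ((1 : ℂ) + (α : ℂ))) *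
          F21 (k - 1) (1 + (α : ℂ)) 2 (2 / (Complex.I * (x : ℂ) + 1)) := by
  obtain ⟨N, rfl⟩ : ∃ N, k = N + 1 := ⟨k - 1, by omega⟩
  have hre : 0 < (I * x + 1).re := by simp
  rw [sum_Icc_one_eq_sum_range, F21, mul_sum]
  refine sum_congr rfl fun m _ => ?_
  rw [show I - (x : ℂ) = I * (I * x + 1) by linear_combination (-(x : ℂ)) * I_sq]
  simpa using residue_summand_eq_F21_summand hre N m α

/-- For `α ∈ (0,1)`, `k` a positive integer and `x ∈ ℝ`,
`∑_{n=1}^{k} C(k−1, n−1)·C(−α, n)·(i−x)^{−n−α}·(2i)^{n−1}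
  = −(α·e^{−iπ(1+α)/2}/(ix+1)^{1+α})·₂F₁(1−k, 1+α; 2; 2/(ix+1))`,
complex powers taken with the principal branch. -/
theorem residue_hypergeom
    (α : ℝ) (hα : α ∈ Set.Ioo (0:ℝ) 1) (k : ℕ) (hk : 0 < k) (x : ℝ) :
    ∑ n ∈ Finset.Icc 1 k,
        ((k - 1).choose (n - 1) : ℂ) * genBinom (-(α : ℂ)) n *
          (Complex.I - (x : ℂ)) ^ (-(n : ℂ) - (α : ℂ)) * (2 * Complex.I) ^ (n - 1)
      = -((α : ℂ) * Complex.exp (-Complex.I * (Real.pi : ℂ) * (1 + (α : ℂ)) / 2) /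
            (Complex.I * (x : ℂ) + 1) ^ ((1 : ℂ) + (α : ℂ))) *
          F21 (k - 1) (1 + (α : ℂ)) 2 (2 / (Complex.I * (x : ℂ) + 1)) :=
  residue_hypergeom_general α k hk x
end

section
/- Let α ∈ (0,1) and let k be a positive integer. Then (−ik/Γ(1−α)) ∫_{0}^{∞} z^{−α} · (−z+i)^k/(1+z²)^{1+k/2} dz = −(i^{1+k}·k/(2·Γ(1−α)·Γ(1+k/2))) · ∑_{n=0}^{k} iⁿ · C(k,n) · Γ((1+α+k−n)/2) · Γ((1−α+n)/2). -/
open MeasureTheory Set Real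
open Complex (I)

/-!
Since `-z + i = i (1 + i z)`, the binomial theorem turns the integrand into
`i^k ∑ iⁿ C(k,n) z^(n-α) (1 + z²)^(-1-k/2)`. Each term is a Beta integral of the second kind:
the substitutions `t = z²` and `y = t / (1 + t)` give
`∫₀^∞ z^(s-1) (1 + z²)^(-p) dz = B(s/2, p - s/2) / 2 = Γ(s/2) Γ(p - s/2) / (2 Γ(p))`,
here with `s = 1 - α + n` and `p = 1 + k/2`, so `p - s/2 = (1 + α + k - n)/2`.
-/

section Beta

lemma ofReal_rpow_mul_one_sub_rpow {x : ℝ} (hx : x ∈ Icc (0 : ℝ) 1) (u v : ℝ) :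
    ((x ^ (u - 1) * (1 - x) ^ (v - 1) : ℝ) : ℂ)
      = (x : ℂ) ^ ((u : ℂ) - 1) * (1 - (x : ℂ)) ^ ((v : ℂ) - 1) := by
  rw [Complex.ofReal_mul, Complex.ofReal_cpow hx.1, Complex.ofReal_cpow (sub_nonneg.2 hx.2)]
  push_cast
  rfl

lemma image_div_one_add_Ioi : (fun t : ℝ => t / (1 + t)) '' Ioi 0 = Ioo 0 1 := by
  ext y
  simp only [mem_image, mem_Ioi, mem_Ioo]
  constructor
  · rintro ⟨t, ht, rfl⟩
    exact ⟨by positivity, (div_lt_one (by linarith)).2 (by linarith)⟩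
  · rintro ⟨hy0, hy1⟩
    refine ⟨y / (1 - y), div_pos hy0 (by linarith), ?_⟩
    field_simp
    ring

lemma injOn_div_one_add : InjOn (fun t : ℝ => t / (1 + t)) (Ioi 0) := by
  intro a ha b hb h
  have : (0 : ℝ) < 1 + a := by linarith [mem_Ioi.1 ha]
  have : (0 : ℝ) < 1 + b := by linarith [mem_Ioi.1 hb]
  field_simp at h
  linarith

lemma hasDerivAt_div_one_add {t : ℝ} (ht : 0 < t) :
    HasDerivAt (fun t : ℝ => t / (1 + t)) (1 / (1 + t) ^ 2) t := by
  have h := (hasDerivAt_id' t).div ((hasDerivAt_id' t).const_add 1) (by positivity : 1 + t ≠ 0)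
  exact h.congr_deriv (by ring)

lemma abs_deriv_smul_rpow_mul_one_sub_rpow_div_one_add {t : ℝ} (ht : 0 < t) (u v : ℝ) :
    |1 / (1 + t) ^ 2| • ((t / (1 + t)) ^ (u - 1) * (1 - t / (1 + t)) ^ (v - 1))
      = t ^ (u - 1) * (1 + t) ^ (-(u + v)) := by
  have h1 : 0 < 1 + t := by positivity
  have hsub : 1 - t / (1 + t) = (1 + t)⁻¹ := by field_simp; ring
  have hexp : (1 + t) ^ (-(u + v))
      = ((1 + t) ^ (2 : ℕ))⁻¹ * ((1 + t) ^ (u - 1))⁻¹ * ((1 + t) ^ (v - 1))⁻¹ := by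
    rw [← rpow_natCast, ← rpow_neg h1.le, ← rpow_neg h1.le, ← rpow_neg h1.le, ← rpow_add h1,
      ← rpow_add h1]
    ring_nf
  rw [smul_eq_mul, abs_of_pos (by positivity), hsub, div_rpow ht.le h1.le, inv_rpow h1.le,
    hexp]
  field_simp

variable {u v : ℝ}

lemma integrableOn_rpow_mul_one_sub_rpow (hu : 0 < u) (hv : 0 < v) :
    IntegrableOn (fun x : ℝ => x ^ (u - 1) * (1 - x) ^ (v - 1)) (Ioc 0 1) := by
  have h := (Complex.betaIntegral_convergent (u := u) (v := v) (by simpa) (by simpa)).1.re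
  refine IntegrableOn.congr_fun h (fun x hx => ?_) measurableSet_Ioc
  rw [← ofReal_rpow_mul_one_sub_rpow (Ioc_subset_Icc_self hx), RCLike.re_to_complex,
    Complex.ofReal_re]

lemma integral_rpow_mul_one_sub_rpow (hu : 0 < u) (hv : 0 < v) :
    ∫ x in (0 : ℝ)..1, x ^ (u - 1) * (1 - x) ^ (v - 1) = Gamma u * Gamma v / Gamma (u + v) := by
  have h := Complex.betaIntegral_eq_Gamma_mul_div u v (by simpa) (by simpa)
  rw [Complex.betaIntegral, ← intervalIntegral.integral_congr
      (fun x hx => ofReal_rpow_mul_one_sub_rpow (by simpa using hx) u v),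
    intervalIntegral.integral_ofReal, ← Complex.ofReal_add, Complex.Gamma_ofReal,
    Complex.Gamma_ofReal, Complex.Gamma_ofReal] at h
  exact_mod_cast h

lemma integrableOn_Ioi_rpow_mul_one_add_rpow_neg (hu : 0 < u) (hv : 0 < v) :
    IntegrableOn (fun t : ℝ => t ^ (u - 1) * (1 + t) ^ (-(u + v))) (Ioi 0) := by
  have h := (integrableOn_image_iff_integrableOn_abs_deriv_smul measurableSet_Ioi
    (fun t ht => (hasDerivAt_div_one_add ht).hasDerivWithinAt) injOn_div_one_add
    (fun x : ℝ => x ^ (u - 1) * (1 - x) ^ (v - 1))).1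
    (by rw [image_div_one_add_Ioi]
        exact (integrableOn_rpow_mul_one_sub_rpow hu hv).mono_set Ioo_subset_Ioc_self)
  exact h.congr_fun (fun t ht => abs_deriv_smul_rpow_mul_one_sub_rpow_div_one_add ht u v)
    measurableSet_Ioi

lemma integral_Ioi_rpow_mul_one_add_rpow_neg (hu : 0 < u) (hv : 0 < v) :
    ∫ t in Ioi 0, t ^ (u - 1) * (1 + t) ^ (-(u + v)) = Gamma u * Gamma v / Gamma (u + v) := by
  have h := integral_image_eq_integral_abs_deriv_smul measurableSet_Ioi
    (fun t ht => (hasDerivAt_div_one_add ht).hasDerivWithinAt) injOn_div_one_add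
    (fun x : ℝ => x ^ (u - 1) * (1 - x) ^ (v - 1))
  rw [image_div_one_add_Ioi, setIntegral_congr_fun measurableSet_Ioi
    (fun t ht => abs_deriv_smul_rpow_mul_one_sub_rpow_div_one_add ht u v)] at h
  rw [← h, ← integral_Ioc_eq_integral_Ioo, ← intervalIntegral.integral_of_le zero_le_one,
    integral_rpow_mul_one_sub_rpow hu hv]

end Beta

section Sq

lemma rpow_two_sub_one_mul_comp_sq {x : ℝ} (hx : 0 < x) (s p : ℝ) :
    x ^ ((2 : ℝ) - 1) * ((x ^ (2 : ℝ)) ^ (s / 2 - 1) * (1 + x ^ (2 : ℝ)) ^ (-p))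
      = x ^ (s - 1) * (1 + x ^ 2) ^ (-p) := by
  rw [← rpow_mul hx.le, ← mul_assoc, ← rpow_add hx, rpow_two]
  ring_nf

variable {s p : ℝ}

lemma integrableOn_Ioi_rpow_mul_one_add_sq_rpow_neg (hs : 0 < s) (hsp : s < 2 * p) :
    IntegrableOn (fun z : ℝ => z ^ (s - 1) * (1 + z ^ 2) ^ (-p)) (Ioi 0) := by
  have h := integrableOn_Ioi_rpow_mul_one_add_rpow_neg (u := s / 2) (v := p - s / 2)
    (by linarith) (by linarith)
  rw [add_sub_cancel, ← integrableOn_Ioi_comp_rpow_iff' _ two_ne_zero] at h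
  exact h.congr_fun (fun x hx => rpow_two_sub_one_mul_comp_sq hx s p) measurableSet_Ioi

lemma integral_Ioi_rpow_mul_one_add_sq_rpow_neg (hs : 0 < s) (hsp : s < 2 * p) :
    ∫ z in Ioi 0, z ^ (s - 1) * (1 + z ^ 2) ^ (-p)
      = Gamma (s / 2) * Gamma (p - s / 2) / (2 * Gamma p) := by
  have h := integral_Ioi_rpow_mul_one_add_rpow_neg (u := s / 2) (v := p - s / 2)
    (by linarith) (by linarith)
  rw [add_sub_cancel, ← integral_comp_rpow_Ioi_of_pos two_pos] at h
  simp_rw [smul_eq_mul, mul_assoc] at h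
  rw [integral_const_mul, setIntegral_congr_fun measurableSet_Ioi
    (fun x hx => rpow_two_sub_one_mul_comp_sq hx s p)] at h
  rw [mul_comm 2 (Gamma p), ← div_div, ← h]
  ring

end Sq

lemma neg_add_I_pow (z : ℂ) (k : ℕ) :
    (-z + I) ^ k = I ^ k * ∑ n ∈ Finset.range (k + 1), I ^ n * k.choose n * z ^ n := by
  rw [show -z + I = I * (I * z + 1) by ring_nf; rw [Complex.I_sq]; ring, mul_pow, add_pow]
  simp only [one_pow, mul_one, mul_pow]
  congr 1
  exact Finset.sum_congr rfl fun n _ => by ring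

lemma rpow_neg_mul_neg_add_I_pow_div {z : ℝ} (hz : 0 < z) (α p : ℝ) (k : ℕ) :
    ((z ^ (-α) : ℝ) : ℂ) * (-(z : ℂ) + I) ^ k / ((1 + z ^ 2) ^ p : ℝ)
      = I ^ k * ∑ n ∈ Finset.range (k + 1),
          I ^ n * k.choose n * ((z ^ ((1 - α + n) - 1) * (1 + z ^ 2) ^ (-p) : ℝ) : ℂ) := by
  rw [neg_add_I_pow, Finset.mul_sum, Finset.mul_sum, Finset.mul_sum, Finset.sum_div]
  refine Finset.sum_congr rfl fun n _ => ?_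
  have hpow : z ^ ((1 - α + n) - 1) * (1 + z ^ 2) ^ (-p)
      = z ^ n * z ^ (-α) / (1 + z ^ 2) ^ p := by
    rw [rpow_neg (by positivity) p, ← rpow_natCast z n, ← rpow_add hz]
    ring_nf
  rw [hpow]
  push_cast
  ring

lemma integral_Ioi_rpow_neg_mul_neg_add_I_pow_div {α p : ℝ} {k : ℕ} (hα : α < 1)
    (hkp : k + 1 - α < 2 * p) :
    ∫ z in Ioi 0, ((z ^ (-α) : ℝ) : ℂ) * (-(z : ℂ) + I) ^ k / ((1 + z ^ 2) ^ p : ℝ)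
      = I ^ k * ∑ n ∈ Finset.range (k + 1), I ^ n * k.choose n *
          ((Gamma ((1 - α + n) / 2) * Gamma (p - (1 - α + n) / 2) / (2 * Gamma p) : ℝ) : ℂ) := by
  have hs : ∀ n ∈ Finset.range (k + 1), 0 < 1 - α + n ∧ 1 - α + n < 2 * p := fun n hn => by
    have : (n : ℝ) ≤ k := by exact_mod_cast Finset.mem_range_succ_iff.1 hn
    constructor <;> linarith [(n.cast_nonneg : (0 : ℝ) ≤ n)]
  have hint : ∀ n ∈ Finset.range (k + 1), IntegrableOn
      (fun z : ℝ => I ^ n * k.choose n * ((z ^ ((1 - α + n) - 1) * (1 + z ^ 2) ^ (-p) : ℝ) : ℂ))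
      (Ioi 0) := fun n hn =>
    ((integrableOn_Ioi_rpow_mul_one_add_sq_rpow_neg (hs n hn).1 (hs n hn).2).ofReal).const_mul _
  rw [setIntegral_congr_fun measurableSet_Ioi
      fun z hz => rpow_neg_mul_neg_add_I_pow_div hz α p k,
    integral_const_mul, integral_finsetSum _ hint]
  congr 1
  refine Finset.sum_congr rfl fun n hn => ?_
  rw [integral_const_mul, integral_complex_ofReal,
    integral_Ioi_rpow_mul_one_add_sq_rpow_neg (hs n hn).1 (hs n hn).2]

theorem weylMarchaud_phik_at_zero_general
    (α : ℝ) (hα : α ∈ Set.Ioo (0:ℝ) 1) (k : ℕ) :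
    (-Complex.I * (k : ℂ) / Complex.ofReal (Real.Gamma (1 - α))) *
        (∫ z in Ioi (0:ℝ),
          Complex.ofReal (z ^ (-α)) * (-(z : ℂ) + Complex.I) ^ k /
            Complex.ofReal ((1 + z ^ 2) ^ (1 + (k : ℝ) / 2)))
      = -(Complex.I ^ (1 + k) * (k : ℂ) /
            (2 * Complex.ofReal (Real.Gamma (1 - α)) *
              Complex.ofReal (Real.Gamma (1 + (k : ℝ) / 2)))) *
          ∑ n ∈ Finset.range (k + 1),
            Complex.I ^ n * (k.choose n : ℂ) *
              Complex.ofReal (Real.Gamma ((1 + α + (k : ℝ) - (n : ℝ)) / 2)) *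
              Complex.ofReal (Real.Gamma ((1 - α + (n : ℝ)) / 2)) := by
  obtain ⟨hα0, hα1⟩ := hα
  have hΓα : (Gamma (1 - α) : ℂ) ≠ 0 := by
    exact_mod_cast (Gamma_pos_of_pos (by linarith)).ne'
  have hΓk : (Gamma (1 + k / 2) : ℂ) ≠ 0 := by
    exact_mod_cast (Gamma_pos_of_pos (by positivity)).ne'
  rw [integral_Ioi_rpow_neg_mul_neg_add_I_pow_div hα1 (by linarith), Finset.mul_sum,
    Finset.mul_sum, Finset.mul_sum]
  refine Finset.sum_congr rfl fun n _ => ?_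
  rw [show (1 + k / 2 : ℝ) - (1 - α + n) / 2 = (1 + α + k - n) / 2 by ring]
  push_cast
  field_simp
  ring

/-- For `α ∈ (0,1)` and `k` a positive integer,
`(−ik/Γ(1−α)) ∫_{0}^{∞} z^{−α}·(−z+i)^k/(1+z²)^{1+k/2} dz
  = −(i^{1+k}·k/(2·Γ(1−α)·Γ(1+k/2))) · ∑_{n=0}^{k} iⁿ·C(k,n)·Γ((1+α+k−n)/2)·Γ((1−α+n)/2)`. -/
theorem weylMarchaud_phik_at_zero
    (α : ℝ) (hα : α ∈ Set.Ioo (0:ℝ) 1) (k : ℕ) (hk : 0 < k) :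
    (-Complex.I * (k : ℂ) / Complex.ofReal (Real.Gamma (1 - α))) *
        (∫ z in Ioi (0:ℝ),
          Complex.ofReal (z ^ (-α)) * (-(z : ℂ) + Complex.I) ^ k /
            Complex.ofReal ((1 + z ^ 2) ^ (1 + (k : ℝ) / 2)))
      = -(Complex.I ^ (1 + k) * (k : ℂ) /
            (2 * Complex.ofReal (Real.Gamma (1 - α)) *
              Complex.ofReal (Real.Gamma (1 + (k : ℝ) / 2)))) *
          ∑ n ∈ Finset.range (k + 1),
            Complex.I ^ n * (k.choose n : ℂ) *
              Complex.ofReal (Real.Gamma ((1 + α + (k : ℝ) - (n : ℝ)) / 2)) *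
              Complex.ofReal (Real.Gamma ((1 - α + (n : ℝ)) / 2)) :=
  weylMarchaud_phik_at_zero_general α hα k
end
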